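/- Let the sequences {(x_k, y_k, z_k)}, {(x*_k, Δy*_k, z*_k)}, {ρ_k}, {σ_k}, {η_k}, {ω_k} be generated by the stabilized LCL algorithm with tolerances ω_* = 0 and η_* = 0. Suppose the iterates {x*_k} (together with {x_k}) lie in a compact set, and that the sequence {x*_k} has a single limit point x*, at which Ĵ(x*) has full row rank. Then, setting y* = ỹ(x*) and z* = g(x*) − J(x*)ᵀy*, the sequence (x_k, y_k, z_k) converges to (x*, y*, z*), and (x*, y*, z*) is a first-order KKT point for (GNP). -/

import Mathlib

open scoped RealInnerProductSpace
open Filter Topology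

noncomputable section

attribute [local instance] Classical.propDecidable

/-- Euclidean space ℝ^n. -/
abbrev Evec (n : ℕ) := EuclideanSpace ℝ (Fin n)

/-- Componentwise minimum of two vectors. -/
def vmin {n : ℕ} (x z : Evec n) : Evec n := WithLp.toLp 2 (fun i => min (x i) (z i))

/-- The ∞-norm of a vector. -/
def normInf {n : ℕ} (x : Evec n) : ℝ := ⨆ i, |x i|

/-- Transpose (adjoint) of a linear map between Euclidean spaces. -/
def Jt {n m : ℕ} (A : Evec n →L[ℝ] Evec m) : Evec m →L[ℝ] Evec n :=
  ContinuousLinearMap.adjoint A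

/-- Restriction of a vector `v` to the set of indices `i` with `xs i > 0`
(the inactive bounds at `xs`). -/
def hatVec {n : ℕ} (xs : Evec n) (v : Evec n) : EuclideanSpace ℝ {i : Fin n // 0 < xs i} :=
  WithLp.toLp 2 (fun (i : {i : Fin n // 0 < xs i}) => v i.1)

/-- "Ĵ has full row rank": the restriction of the transpose of `A` to the
inactive indices of `xs` is injective. -/
def FullRank {n m : ℕ} (A : Evec n →L[ℝ] Evec m) (xs : Evec n) : Prop :=
  Function.Injective (fun y : Evec m => hatVec xs (Jt A y))

/-- First-order KKT point for (GNP). -/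
def isKKT {n m : ℕ} (c : Evec n → Evec m) (g : Evec n → Evec n)
    (J : Evec n → (Evec n →L[ℝ] Evec m)) (x : Evec n) (y : Evec m) (z : Evec n) : Prop :=
  c x = 0 ∧ g x - Jt (J x) y = z ∧ vmin x z = 0

/-- The stabilized LCL algorithm: problem data, parameters, and the sequences
of iterates it generates, together with the rules that govern them. -/
structure LCL (n m : ℕ) where
  /-- objective function -/
  f : Evec n → ℝ
  /-- nonlinear constraint functions -/
  c : Evec n → Evec m
  /-- gradient of `f` -/
  g : Evec n → Evec n
  /-- Jacobian of `c` -/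
  J : Evec n → (Evec n →L[ℝ] Evec m)
  /-- open set containing the nonnegative orthant on which `f, c` are C² -/
  U : Set (Evec n)
  hUopen : IsOpen U
  hUorth : {x : Evec n | ∀ i, 0 ≤ x i} ⊆ U
  hf : ContDiffOn ℝ 2 f U
  hc : ContDiffOn ℝ 2 c U
  hg : ∀ x ∈ U, HasGradientAt f (g x) x
  hJ : ∀ x ∈ U, HasFDerivAt c (J x) x
  -- fixed parameters
  tauρ : ℝ
  tauσ : ℝ
  alf : ℝ
  bet : ℝ
  σlo : ℝ
  σhi : ℝ
  ωstar : ℝ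
  ηstar : ℝ
  htauρ : 1 < tauρ
  htauσ : 1 < tauσ
  half0 : 0 < alf
  half1 : alf < 1
  hbet : 0 < bet
  hσlo : 0 < σlo
  hσlohi : σlo ≤ σhi
  hωstar : 0 ≤ ωstar
  hηstar : 0 ≤ ηstar
  -- the sequences of iterates
  x : ℕ → Evec n
  y : ℕ → Evec m
  z : ℕ → Evec n
  /-- subproblem solutions x*_k -/
  xs : ℕ → Evec n
  /-- subproblem multipliers Δy*_k -/
  dys : ℕ → Evec m
  /-- subproblem reduced costs z*_k -/
  zs : ℕ → Evec n
  ρ : ℕ → ℝ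
  σ : ℕ → ℝ
  η : ℕ → ℝ
  ω : ℕ → ℝ
  hρ0 : 1 < ρ 0
  hσ0 : 0 < σ 0
  hη0 : 0 < η 0
  -- choice of subproblem tolerances: ω_k ≥ ω_* and ω_k → ω_*
  hω_lb : ∀ k, ωstar ≤ ω k
  hω_to : Filter.Tendsto ω Filter.atTop (nhds ωstar)
  -- the inexact elastic subproblem conditions (59)
  sub_nonneg : ∀ k, ∀ i, 0 ≤ xs k i
  sub_lin : ∀ k, ∃ v w : Evec m, (∀ i, 0 ≤ v i) ∧ (∀ i, 0 ≤ w i) ∧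
    c (x k) + J (x k) (xs k - x k) + v - w = 0
  sub_grad : ∀ k,
    g (xs k) - Jt (J (xs k)) (y k - ρ k • c (xs k)) - Jt (J (x k)) (dys k) = zs k
  sub_opt : ∀ k, normInf (vmin (xs k) (zs k)) ≤ ω k
  sub_dy : ∀ k, normInf (dys k) ≤ σ k + ω k
  -- successful iteration updates
  upd_succ : ∀ k, ‖c (xs k)‖ ≤ max ηstar (η k) →
    x (k+1) = xs k ∧
    y (k+1) = y k + dys k - ρ k • c (xs k) ∧
    z (k+1) = zs k ∧
    ρ (k+1) = ρ k ∧
    σ (k+1) = max σlo (min (normInf (dys k)) σhi) ∧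
    η (k+1) = η k / ρ (k+1) ^ bet
  -- unsuccessful iteration updates
  upd_fail : ∀ k, ¬ ‖c (xs k)‖ ≤ max ηstar (η k) →
    x (k+1) = x k ∧
    y (k+1) = y k ∧
    z (k+1) = z k ∧
    ρ (k+1) = tauρ * ρ k ∧
    σ (k+1) = σ k / tauσ ∧
    η (k+1) = η 0 / ρ (k+1) ^ alf

/-- The updated multiplier estimate ŷ_k = y*_k − ρ_k c(x*_k). -/
def LCL.yhat {n m : ℕ} (A : LCL n m) (k : ℕ) : Evec m :=
  A.y k + A.dys k - A.ρ k • A.c (A.xs k)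

/-!
Compactness and uniqueness of the limit point give `x*_k → x*`. The subproblem optimality
conditions say that `Ĵ(x*_k)ᵀ ŷ_k`, with `ŷ_k = y_k + Δy*_k − ρ_k c(x*_k)`, equals `ĝ(x*_k)`
minus the inactive part of `z*_k` (which is `O(ω_k)`) up to the error
`(J(x*_k) − J(x_k))ᵀ Δy*_k`; as `Ĵ(x*)ᵀ` is injective, `ŷ_k` converges to the `y` with
`Ĵ(x*)ᵀ y = ĝ(x*)` as soon as that error vanishes.

If only finitely many iterations were successful, `x_k` and `y_k` would freeze and `σ_k → 0`
would force `Δy*_k → 0`, so `ρ_k c(x*_k) = y_k + Δy*_k − ŷ_k` would converge; but two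
consecutive failures give `ρ_k ‖c(x*_k)‖ > ρ_k η_k = η_0 ρ_k^(1−α) → ∞`. So infinitely many
iterations succeed, `(x_k, y_k, z_k)` copies `(x*_k, ŷ_k, z*_k)` at each of them, and
`‖c(x*_k)‖ ≤ η_k → 0` there gives `c(x*) = 0`.
-/

theorem tendsto_of_frequently_update {X : Type*} [TopologicalSpace X] {a b : ℕ → X}
    {S : ℕ → Prop} (hS : ∃ᶠ k in atTop, S k) (hupdate : ∀ k, S k → a (k + 1) = b k)
    (hkeep : ∀ k, ¬ S k → a (k + 1) = a k) {L : X} (hb : Tendsto b atTop (𝓝 L)) :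
    Tendsto a atTop (𝓝 L) := by
  intro V hV
  obtain ⟨N, hN⟩ := eventually_atTop.mp (hb hV)
  obtain ⟨k₀, hk₀N, hk₀⟩ := frequently_atTop.mp hS N
  refine eventually_atTop.mpr ⟨k₀ + 1, fun k hk => ?_⟩
  induction k, hk using Nat.le_induction with
  | base => rw [hupdate k₀ hk₀]; exact hN k₀ hk₀N
  | succ k hk ih =>
    by_cases hSk : S k
    · rw [hupdate k hSk]; exact hN k (by omega)
    · rwa [hkeep k hSk]

theorem tendsto_zero_of_eventually_succ_eq_div {a : ℕ → ℝ} {q : ℝ} (hq : 1 < q)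
    (h : ∀ᶠ k in atTop, a (k + 1) = a k / q) : Tendsto a atTop (𝓝 0) := by
  obtain ⟨K, hK⟩ := eventually_atTop.mp h
  have hgeom : ∀ j, a (j + K) = a K / q ^ j := by
    intro j
    induction j with
    | zero => simp
    | succ j ih => rw [add_right_comm, hK _ (by omega), ih, div_div, pow_succ]
  rw [← tendsto_add_atTop_iff_nat K]
  simpa only [hgeom] using
    tendsto_const_nhds.div_atTop (tendsto_pow_atTop_atTop_of_one_lt hq)

theorem norm_le_sqrt_card_mul_of_forall_abs_le {ι : Type*} [Fintype ι]
    {v : EuclideanSpace ℝ ι} {C : ℝ} (h : ∀ i, |v i| ≤ C) :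
    ‖v‖ ≤ √(Fintype.card ι) * C := by
  rcases isEmpty_or_nonempty ι with hι | ⟨⟨i₀⟩⟩
  · simp [Subsingleton.elim v 0]
  have hC : 0 ≤ C := (abs_nonneg _).trans (h i₀)
  rw [EuclideanSpace.norm_eq, ← Real.sqrt_sq hC, ← Real.sqrt_mul (Nat.cast_nonneg _)]
  refine Real.sqrt_le_sqrt ?_
  calc ∑ i, ‖v i‖ ^ 2 ≤ ∑ _i : ι, C ^ 2 := Finset.sum_le_sum fun i _ => by
        rw [Real.norm_eq_abs]; exact pow_le_pow_left₀ (abs_nonneg _) (h i) 2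
    _ = Fintype.card ι * C ^ 2 := by simp

theorem abs_le_normInf {n : ℕ} (v : Evec n) (i : Fin n) : |v i| ≤ normInf v :=
  le_ciSup (Set.finite_range fun j => |v j|).bddAbove i

theorem abs_le_of_abs_min_le {a b c : ℝ} (h : |min a b| ≤ c) (hca : c < a) : |b| ≤ c := by
  rcases le_total a b with hab | hba
  · rw [min_eq_left hab] at h
    linarith [le_abs_self a]
  · rwa [min_eq_right hba] at h

theorem vmin_eq_zero_of_complementary {n : ℕ} {x z : Evec n} (hx : ∀ i, 0 ≤ x i)
    (hz : ∀ i, 0 ≤ z i) (hxz : ∀ i, 0 < x i → z i = 0) : vmin x z = 0 := by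
  ext i
  change min (x i) (z i) = 0
  rcases (hx i).lt_or_eq with hpos | hzero
  · rw [hxz i hpos, min_eq_right hpos.le]
  · rw [← hzero, min_eq_left (hz i)]

theorem Filter.Tendsto.clm_apply {ι E F : Type*} [NormedAddCommGroup E] [NormedSpace ℝ E]
    [NormedAddCommGroup F] [NormedSpace ℝ F] {l : Filter ι} {T : ι → E →L[ℝ] F} {v : ι → E}
    {T₀ : E →L[ℝ] F} {v₀ : E} (hT : Tendsto T l (𝓝 T₀)) (hv : Tendsto v l (𝓝 v₀)) :
    Tendsto (fun i => T i (v i)) l (𝓝 (T₀ v₀)) :=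
  ((continuous_fst.clm_apply continuous_snd).tendsto (T₀, v₀)).comp (hT.prodMk_nhds hv)

section InjectiveLimit

variable {ι E F : Type*} [NormedAddCommGroup E] [NormedSpace ℝ E] [FiniteDimensional ℝ E]
  [NormedAddCommGroup F] [NormedSpace ℝ F] {l : Filter ι} {S : ι → E →L[ℝ] F} {T : E →L[ℝ] F}

theorem exists_eventually_norm_le_mul_norm_apply (hS : Tendsto S l (𝓝 T))
    (hT : Function.Injective T) : ∃ C > 0, ∀ᶠ i in l, ∀ v, ‖v‖ ≤ C * ‖S i v‖ := by
  obtain ⟨K, hK0, hK⟩ := (LinearMap.injective_iff_antilipschitz (T : E →ₗ[ℝ] F)).mp hT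
  have hKpos : (0 : ℝ) < K := hK0
  refine ⟨2 * K, by positivity, ?_⟩
  filter_upwards [hS.eventually (Metric.ball_mem_nhds T (inv_pos.mpr (mul_pos two_pos hKpos)))]
    with i hi v
  have hTv : ‖v‖ ≤ K * ‖T v‖ := by simpa [dist_eq_norm] using hK.le_mul_dist v 0
  have hpert : ‖(T - S i) v‖ ≤ (2 * (K : ℝ))⁻¹ * ‖v‖ := by
    refine ((T - S i).le_opNorm v).trans (mul_le_mul_of_nonneg_right ?_ (norm_nonneg v))
    rw [dist_eq_norm, norm_sub_rev] at hi
    exact hi.le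
  have hsplit : ‖T v‖ ≤ ‖S i v‖ + ‖(T - S i) v‖ := by
    simpa using norm_add_le (S i v) ((T - S i) v)
  have hhalf : (K : ℝ) * ((2 * (K : ℝ))⁻¹ * ‖v‖) = ‖v‖ / 2 := by field_simp
  nlinarith [mul_le_mul_of_nonneg_left hsplit hKpos.le, mul_le_mul_of_nonneg_left hpert hKpos.le]

theorem exists_tendsto_of_tendsto_apply_of_injective [l.NeBot] (hS : Tendsto S l (𝓝 T))
    (hT : Function.Injective T) {u : ι → E} {w : F}
    (hu : Tendsto (fun i => S i (u i)) l (𝓝 w)) : ∃ v, T v = w ∧ Tendsto u l (𝓝 v) := by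
  obtain ⟨C, hC0, hC⟩ := exists_eventually_norm_le_mul_norm_apply hS hT
  obtain ⟨b, hb⟩ := hu.norm.isBoundedUnder_le
  have hbdd : IsBoundedUnder (· ≤ ·) l (norm ∘ u) := isBoundedUnder_of_eventually_le
    (a := C * b) <| by
      filter_upwards [hC, hb] with i hi hbi
      exact (hi (u i)).trans (mul_le_mul_of_nonneg_left hbi hC0.le)
  have hTS : Tendsto (fun i => T - S i) l (𝓝 0) := by
    simpa using (tendsto_const_nhds (x := T)).sub hS
  have hTu : Tendsto (fun i => T (u i)) l (𝓝 w) := by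
    simpa using hu.add
      (hTS.op_zero_isBoundedUnder_le hbdd (fun L v => L v) fun L v => L.le_opNorm v)
  have hemb : Topology.IsClosedEmbedding T :=
    LinearMap.isClosedEmbedding_of_injective (f := (T : E →ₗ[ℝ] F)) (LinearMap.ker_eq_bot.mpr hT)
  obtain ⟨v, rfl⟩ : w ∈ Set.range T :=
    hemb.isClosed_range.mem_of_tendsto hTu (.of_forall fun i => ⟨u i, rfl⟩)
  exact ⟨v, rfl, hemb.isInducing.tendsto_nhds_iff.mpr hTu⟩

end InjectiveLimit

def hatCLM {n : ℕ} (xs : Evec n) : Evec n →L[ℝ] EuclideanSpace ℝ {i : Fin n // 0 < xs i} :=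
  LinearMap.toContinuousLinearMap
    { toFun := hatVec xs
      map_add' := fun _ _ => rfl
      map_smul' := fun _ _ => rfl }

namespace LCL

variable {n m : ℕ} (A : LCL n m)

def Success (k : ℕ) : Prop := ‖A.c (A.xs k)‖ ≤ max A.ηstar (A.η k)

theorem one_lt_ρ (k : ℕ) : 1 < A.ρ k := by
  induction k with
  | zero => exact A.hρ0
  | succ k ih =>
    by_cases hk : A.Success k
    · rw [(A.upd_succ k hk).2.2.2.1]; exact ih
    · rw [(A.upd_fail k hk).2.2.2.1]; nlinarith [A.htauρ]

theorem ρ_pos (k : ℕ) : 0 < A.ρ k := one_pos.trans (A.one_lt_ρ k)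

theorem monotone_ρ : Monotone A.ρ := by
  refine monotone_nat_of_le_succ fun k => ?_
  by_cases hk : A.Success k
  · rw [(A.upd_succ k hk).2.2.2.1]
  · rw [(A.upd_fail k hk).2.2.2.1]; nlinarith [A.htauρ, A.one_lt_ρ k]

theorem η_pos (k : ℕ) : 0 < A.η k := by
  induction k with
  | zero => exact A.hη0
  | succ k ih =>
    by_cases hk : A.Success k
    · rw [(A.upd_succ k hk).2.2.2.2.2]; exact div_pos ih (Real.rpow_pos_of_pos (A.ρ_pos _) _)
    · rw [(A.upd_fail k hk).2.2.2.2.2]; exact div_pos A.hη0 (Real.rpow_pos_of_pos (A.ρ_pos _) _)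

theorem σ_pos (k : ℕ) : 0 < A.σ k := by
  induction k with
  | zero => exact A.hσ0
  | succ k ih =>
    by_cases hk : A.Success k
    · rw [(A.upd_succ k hk).2.2.2.2.1]; exact A.hσlo.trans_le (le_max_left _ _)
    · rw [(A.upd_fail k hk).2.2.2.2.1]; exact div_pos ih (by linarith [A.htauσ])

theorem σ_le_max (k : ℕ) : A.σ k ≤ max (A.σ 0) A.σhi := by
  induction k with
  | zero => exact le_max_left _ _
  | succ k ih =>
    by_cases hk : A.Success k
    · rw [(A.upd_succ k hk).2.2.2.2.1]
      exact max_le (A.hσlohi.trans (le_max_right _ _)) ((min_le_right _ _).trans (le_max_right _ _))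
    · rw [(A.upd_fail k hk).2.2.2.2.1]
      exact (div_le_self (A.σ_pos k).le A.htauσ.le).trans ih

theorem norm_dys_le (k : ℕ) : ‖A.dys k‖ ≤ √m * (A.σ k + A.ω k) := by
  simpa using norm_le_sqrt_card_mul_of_forall_abs_le fun i =>
    (abs_le_normInf (A.dys k) i).trans (A.sub_dy k)

theorem isBoundedUnder_norm_dys : IsBoundedUnder (· ≤ ·) atTop (norm ∘ A.dys) := by
  obtain ⟨W, hW⟩ := A.hω_to.bddAbove_range
  refine isBoundedUnder_of ⟨√m * (max (A.σ 0) A.σhi + W), fun k => (A.norm_dys_le k).trans ?_⟩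
  gcongr
  · exact A.σ_le_max k
  · exact hW ⟨k, rfl⟩

theorem tendsto_ω_zero (hω : A.ωstar = 0) : Tendsto A.ω atTop (𝓝 0) := hω ▸ A.hω_to

theorem tendsto_dys_zero (hω : A.ωstar = 0) (hσ : Tendsto A.σ atTop (𝓝 0)) :
    Tendsto A.dys atTop (𝓝 0) := by
  refine squeeze_zero_norm A.norm_dys_le ?_
  simpa using (hσ.add (A.tendsto_ω_zero hω)).const_mul √m

theorem tendsto_ρ_atTop (hfail : ∃ᶠ k in atTop, ¬ A.Success k) : Tendsto A.ρ atTop atTop := by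
  have hpow : ∀ N : ℕ, ∃ k, A.tauρ ^ N ≤ A.ρ k := by
    intro N
    induction N with
    | zero => exact ⟨0, by simpa using (A.one_lt_ρ 0).le⟩
    | succ N ih =>
      obtain ⟨k, hk⟩ := ih
      obtain ⟨j, hkj, hj⟩ := frequently_atTop.mp hfail k
      refine ⟨j + 1, ?_⟩
      rw [(A.upd_fail j hj).2.2.2.1, pow_succ']
      exact mul_le_mul_of_nonneg_left (hk.trans (A.monotone_ρ hkj)) (by linarith [A.htauρ])
  refine tendsto_atTop_atTop_of_monotone A.monotone_ρ fun b => ?_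
  obtain ⟨N, hN⟩ := pow_unbounded_of_one_lt b A.htauρ
  obtain ⟨k, hk⟩ := hpow N
  exact ⟨k, hN.le.trans hk⟩

theorem tendsto_η_zero : Tendsto A.η atTop (𝓝 0) := by
  by_cases hfail : ∃ᶠ k in atTop, ¬ A.Success k
  · obtain ⟨j, hj⟩ := hfail.exists
    -- successes only shrink η and leave ρ unchanged, so η stays below the last reset value
    have hle : ∀ k, j + 1 ≤ k → A.η k ≤ A.η 0 / A.ρ k ^ A.alf := by
      intro k hk
      induction k, hk using Nat.le_induction with
      | base => exact (A.upd_fail j hj).2.2.2.2.2.le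
      | succ k hk ih =>
        by_cases hs : A.Success k
        · obtain ⟨-, -, -, hρ, -, hη⟩ := A.upd_succ k hs
          rw [hη, hρ]
          exact (div_le_self (A.η_pos k).le (Real.one_le_rpow (A.one_lt_ρ k).le A.hbet.le)).trans ih
        · exact (A.upd_fail k hs).2.2.2.2.2.le
    refine squeeze_zero' (.of_forall fun k => (A.η_pos k).le) (eventually_atTop.mpr ⟨j + 1, hle⟩) ?_
    exact tendsto_const_nhds.div_atTop ((tendsto_rpow_atTop A.half0).comp (A.tendsto_ρ_atTop hfail))
  · simp only [not_frequently, not_not] at hfail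
    obtain ⟨K, hK⟩ := eventually_atTop.mp hfail
    obtain ⟨r, hr⟩ := (eventuallyConst_atTop_nat.mpr
      ⟨K, fun k hk => (A.upd_succ k (hK k hk)).2.2.2.1⟩).eventuallyEq_const
    obtain ⟨k₀, hk₀⟩ := hr.exists
    have hr1 : 1 < r := by simpa [hk₀] using A.one_lt_ρ k₀
    refine tendsto_zero_of_eventually_succ_eq_div (Real.one_lt_rpow hr1 A.hbet) ?_
    filter_upwards [hfail, (tendsto_add_atTop_nat 1).eventually hr] with k hk hρ
    rw [(A.upd_succ k hk).2.2.2.2.2, hρ]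

theorem rpow_le_ρ_mul_norm_c {k : ℕ} (hk : ¬ A.Success k) (hk1 : ¬ A.Success (k + 1)) :
    A.η 0 * A.ρ (k + 1) ^ (1 - A.alf) ≤ A.ρ (k + 1) * ‖A.c (A.xs (k + 1))‖ := by
  have hρ := A.ρ_pos (k + 1)
  have hη : A.ρ (k + 1) * A.η (k + 1) = A.η 0 * A.ρ (k + 1) ^ (1 - A.alf) := by
    rw [(A.upd_fail k hk).2.2.2.2.2, Real.rpow_sub hρ, Real.rpow_one]
    field_simp
  rw [← hη]
  exact mul_le_mul_of_nonneg_left ((le_max_right _ _).trans (not_le.mp hk1).le) hρ.le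

theorem mem_U {x : Evec n} (hx : ∀ i, 0 ≤ x i) : x ∈ A.U := A.hUorth hx

theorem continuousAt_c {x : Evec n} (hx : ∀ i, 0 ≤ x i) : ContinuousAt A.c x :=
  A.hc.continuousOn.continuousAt (A.hUopen.mem_nhds (A.mem_U hx))

theorem continuousAt_J {x : Evec n} (hx : ∀ i, 0 ≤ x i) : ContinuousAt A.J x :=
  ((A.hc.continuousOn_fderiv_of_isOpen A.hUopen (by norm_num)).congr
    fun y hy => (A.hJ y hy).fderiv.symm).continuousAt (A.hUopen.mem_nhds (A.mem_U hx))

theorem continuousAt_g {x : Evec n} (hx : ∀ i, 0 ≤ x i) : ContinuousAt A.g x := by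
  have hfd := A.hf.continuousOn_fderiv_of_isOpen A.hUopen (by norm_num)
  refine (((InnerProductSpace.toDual ℝ (Evec n)).symm.continuous.comp_continuousOn hfd).congr
    fun y hy => ?_).continuousAt (A.hUopen.mem_nhds (A.mem_U hx))
  simp [(A.hg y hy).hasFDerivAt.fderiv]

theorem tendsto_Jt_J {u : ℕ → Evec n} {x : Evec n} (hx : ∀ i, 0 ≤ x i)
    (hu : Tendsto u atTop (𝓝 x)) :
    Tendsto (fun k => Jt (A.J (u k))) atTop (𝓝 (Jt (A.J x))) :=
  (ContinuousLinearMap.adjoint.continuous.tendsto _).comp ((A.continuousAt_J hx).tendsto.comp hu)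

theorem nonneg_of_tendsto_xs {xstar : Evec n} (hxs : Tendsto A.xs atTop (𝓝 xstar)) (i : Fin n) :
    0 ≤ xstar i :=
  ge_of_tendsto' (((EuclideanSpace.proj i).continuous.tendsto _).comp hxs) fun k => A.sub_nonneg k i

theorem nonneg_of_tendsto_zs (hω : A.ωstar = 0) {zstar : Evec n}
    (hzs : Tendsto A.zs atTop (𝓝 zstar)) (i : Fin n) : 0 ≤ zstar i := by
  refine le_of_tendsto_of_tendsto' (by simpa using (A.tendsto_ω_zero hω).neg)
    (((EuclideanSpace.proj i).continuous.tendsto _).comp hzs) fun k => ?_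
  have hres := (abs_le_normInf (vmin (A.xs k) (A.zs k)) i).trans (A.sub_opt k)
  exact (neg_le_of_abs_le hres).trans (min_le_right _ _)

theorem Jt_yhat_eq (k : ℕ) : Jt (A.J (A.xs k)) (A.yhat k) =
    A.g (A.xs k) - A.zs k + (Jt (A.J (A.xs k)) - Jt (A.J (A.x k))) (A.dys k) := by
  rw [← A.sub_grad k, yhat]
  simp only [map_add, map_sub, sub_apply]
  abel

theorem tendsto_hatVec_zs (hω : A.ωstar = 0) {xstar : Evec n}
    (hxs : Tendsto A.xs atTop (𝓝 xstar)) :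
    Tendsto (fun k => hatVec xstar (A.zs k)) atTop (𝓝 0) := by
  have hω0 := A.tendsto_ω_zero hω
  have hbound : ∀ᶠ k in atTop, ∀ i : {i : Fin n // 0 < xstar i}, |A.zs k i| ≤ A.ω k := by
    refine eventually_all.mpr fun i => ?_
    have hgap : Tendsto (fun k => A.xs k i - A.ω k) atTop (𝓝 (xstar i)) := by
      simpa using (((EuclideanSpace.proj i.1).continuous.tendsto _).comp hxs).sub hω0
    filter_upwards [hgap.eventually (eventually_gt_nhds i.2)] with k hk
    exact abs_le_of_abs_min_le ((abs_le_normInf (vmin (A.xs k) (A.zs k)) i).trans (A.sub_opt k))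
      (by linarith)
  refine squeeze_zero_norm' ?_ (by simpa using hω0.const_mul √(Fintype.card {i // 0 < xstar i}))
  filter_upwards [hbound] with k hk
  exact norm_le_sqrt_card_mul_of_forall_abs_le hk

theorem tendsto_yhat (hω : A.ωstar = 0) {xstar : Evec n} (hxs : Tendsto A.xs atTop (𝓝 xstar))
    (hFR : FullRank (A.J xstar) xstar)
    (hdiff : Tendsto (fun k => (Jt (A.J (A.xs k)) - Jt (A.J (A.x k))) (A.dys k)) atTop (𝓝 0)) :
    ∃ y, hatVec xstar (Jt (A.J xstar) y) = hatVec xstar (A.g xstar) ∧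
      Tendsto A.yhat atTop (𝓝 y) := by
  have hx := A.nonneg_of_tendsto_xs hxs
  set H := hatCLM xstar
  have hS : Tendsto (fun k => H ∘L Jt (A.J (A.xs k))) atTop (𝓝 (H ∘L Jt (A.J xstar))) :=
    ((ContinuousLinearMap.compL ℝ _ _ _ H).continuous.tendsto _).comp (A.tendsto_Jt_J hx hxs)
  have hu : Tendsto (fun k => (H ∘L Jt (A.J (A.xs k))) (A.yhat k)) atTop
      (𝓝 (H (A.g xstar))) := by
    have hlim := (((H.continuous.tendsto _).comp ((A.continuousAt_g hx).tendsto.comp hxs)).sub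
      (A.tendsto_hatVec_zs hω hxs)).add ((H.continuous.tendsto 0).comp hdiff)
    simp only [sub_zero, map_zero, add_zero] at hlim
    refine hlim.congr fun k => ?_
    simp only [ContinuousLinearMap.comp_apply, A.Jt_yhat_eq, map_add, map_sub, Function.comp_apply]
    rfl
  exact exists_tendsto_of_tendsto_apply_of_injective hS hFR hu

theorem frequently_success (hω : A.ωstar = 0) {xstar : Evec n}
    (hxs : Tendsto A.xs atTop (𝓝 xstar)) (hFR : FullRank (A.J xstar) xstar) :
    ∃ᶠ k in atTop, A.Success k := by
  by_contra hnot
  rw [not_frequently] at hnot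
  obtain ⟨K, hK⟩ := eventually_atTop.mp hnot
  obtain ⟨x₀, hx₀⟩ := (eventuallyConst_atTop_nat.mpr
    ⟨K, fun k hk => (A.upd_fail k (hK k hk)).1⟩).eventuallyEq_const
  obtain ⟨y₀, hy₀⟩ := (eventuallyConst_atTop_nat.mpr
    ⟨K, fun k hk => (A.upd_fail k (hK k hk)).2.1⟩).eventuallyEq_const
  have hσ : Tendsto A.σ atTop (𝓝 0) := tendsto_zero_of_eventually_succ_eq_div A.htauσ
    (hnot.mono fun k hk => (A.upd_fail k hk).2.2.2.2.1)
  have hdys := A.tendsto_dys_zero hω hσ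
  have hJx : Tendsto (fun k => Jt (A.J (A.x k))) atTop (𝓝 (Jt (A.J x₀))) :=
    tendsto_const_nhds.congr' (hx₀.fun_comp fun x => Jt (A.J x)).symm
  have hdiff : Tendsto (fun k => (Jt (A.J (A.xs k)) - Jt (A.J (A.x k))) (A.dys k)) atTop (𝓝 0) := by
    simpa using ((A.tendsto_Jt_J (A.nonneg_of_tendsto_xs hxs) hxs).sub hJx).clm_apply hdys
  obtain ⟨y, -, hyhat⟩ := A.tendsto_yhat hω hxs hFR hdiff
  have hy : Tendsto A.y atTop (𝓝 y₀) := tendsto_const_nhds.congr' hy₀.symm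
  have hbdd : Tendsto (fun k => A.ρ k * ‖A.c (A.xs k)‖) atTop (𝓝 ‖y₀ + 0 - y‖) := by
    refine ((hy.add hdys).sub hyhat).norm.congr fun k => ?_
    rw [yhat, sub_sub_cancel, norm_smul, Real.norm_of_nonneg (A.ρ_pos k).le]
  have hinf : Tendsto (fun k => A.ρ k * ‖A.c (A.xs k)‖) atTop atTop := by
    rw [← tendsto_add_atTop_iff_nat 1]
    refine tendsto_atTop_mono' _ ?_ ((((tendsto_rpow_atTop (sub_pos.mpr A.half1)).comp
      (A.tendsto_ρ_atTop hnot.frequently)).comp (tendsto_add_atTop_nat 1)).const_mul_atTop A.hη0)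
    filter_upwards [hnot, (tendsto_add_atTop_nat 1).eventually hnot] with k hk hk1
    exact A.rpow_le_ρ_mul_norm_c hk hk1
  exact not_tendsto_nhds_of_tendsto_atTop hinf _ hbdd

theorem c_eq_zero_of_tendsto (hη : A.ηstar = 0) {xstar : Evec n}
    (hxs : Tendsto A.xs atTop (𝓝 xstar)) (hsucc : ∃ᶠ k in atTop, A.Success k) :
    A.c xstar = 0 := by
  have hc := ((A.continuousAt_c (A.nonneg_of_tendsto_xs hxs)).tendsto.comp hxs).norm
  have hclosed : IsClosed {p : ℝ × ℝ | p.1 ≤ p.2} := isClosed_le continuous_fst continuous_snd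
  have hle : ‖A.c xstar‖ ≤ 0 := hclosed.mem_of_frequently_of_tendsto
    (hsucc.mono fun k hk => by rwa [Success, hη, max_eq_right (A.η_pos k).le] at hk)
    (hc.prodMk_nhds A.tendsto_η_zero)
  exact norm_le_zero_iff.mp hle

theorem tendsto_Jt_sub_apply_dys {xstar : Evec n} (hx : ∀ i, 0 ≤ xstar i)
    (hxs : Tendsto A.xs atTop (𝓝 xstar)) (hxk : Tendsto A.x atTop (𝓝 xstar)) :
    Tendsto (fun k => (Jt (A.J (A.xs k)) - Jt (A.J (A.x k))) (A.dys k)) atTop (𝓝 0) := by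
  have hJ : Tendsto (fun k => Jt (A.J (A.xs k)) - Jt (A.J (A.x k))) atTop (𝓝 0) := by
    simpa using (A.tendsto_Jt_J hx hxs).sub (A.tendsto_Jt_J hx hxk)
  exact hJ.op_zero_isBoundedUnder_le A.isBoundedUnder_norm_dys (fun T v => T v)
    fun T v => T.le_opNorm v

theorem tendsto_zs {xstar : Evec n} {ystar : Evec m} (hx : ∀ i, 0 ≤ xstar i)
    (hxs : Tendsto A.xs atTop (𝓝 xstar)) (hyhat : Tendsto A.yhat atTop (𝓝 ystar))
    (hdiff : Tendsto (fun k => (Jt (A.J (A.xs k)) - Jt (A.J (A.x k))) (A.dys k)) atTop (𝓝 0)) :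
    Tendsto A.zs atTop (𝓝 (A.g xstar - Jt (A.J xstar) ystar)) := by
  have hJy : Tendsto (fun k => Jt (A.J (A.xs k)) (A.yhat k)) atTop
      (𝓝 (Jt (A.J xstar) ystar)) :=
    (A.tendsto_Jt_J hx hxs).clm_apply hyhat
  have hlim := (((A.continuousAt_g hx).tendsto.comp hxs).sub hJy).add hdiff
  rw [add_zero] at hlim
  refine hlim.congr fun k => ?_
  simp only [Function.comp_apply, A.Jt_yhat_eq]
  abel

end LCL

theorem stmt9_general {n m : ℕ} (A : LCL n m)
    (hws : A.ωstar = 0) (hes : A.ηstar = 0)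
    -- compactness of the iterates
    (B : Set (Evec n)) (hB : IsCompact B)
    (hxsB : ∀ k, A.xs k ∈ B)
    -- x* is the single limit point of {x*_k}, and Ĵ(x*) has full row rank
    (xstar : Evec n)
    (huniq : ∀ xl : Evec n, MapClusterPt xl atTop A.xs → xl = xstar)
    (hFR : FullRank (A.J xstar) xstar)
    -- y* = ỹ(x*) : the unique minimizer of y ↦ ‖ĝ(x*) − Ĵ(x*)ᵀy‖²
    (ystar : Evec m)
    (hystar : ∀ yy : Evec m, yy ≠ ystar →
      ‖hatVec xstar (A.g xstar) - hatVec xstar (Jt (A.J xstar) ystar)‖ <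
        ‖hatVec xstar (A.g xstar) - hatVec xstar (Jt (A.J xstar) yy)‖) :
    Tendsto (fun k => (A.x k, A.y k, A.z k)) atTop
      (𝓝 (xstar, ystar, A.g xstar - Jt (A.J xstar) ystar)) ∧
    isKKT A.c A.g A.J xstar ystar (A.g xstar - Jt (A.J xstar) ystar) := by
  have hxs : Tendsto A.xs atTop (𝓝 xstar) :=
    hB.tendsto_nhds_of_unique_mapClusterPt (.of_forall hxsB) fun x _ hx => huniq x hx
  have hx0 := A.nonneg_of_tendsto_xs hxs
  have hsucc := A.frequently_success hws hxs hFR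
  have hx : Tendsto A.x atTop (𝓝 xstar) := tendsto_of_frequently_update hsucc
    (fun k hk => (A.upd_succ k hk).1) (fun k hk => (A.upd_fail k hk).1) hxs
  have hdiff := A.tendsto_Jt_sub_apply_dys hx0 hxs hx
  obtain ⟨y, hy, hyhat⟩ := A.tendsto_yhat hws hxs hFR hdiff
  obtain rfl : y = ystar := by
    by_contra hne
    have hlt := hystar y hne
    rw [hy, sub_self, norm_zero] at hlt
    exact (norm_nonneg _).not_gt hlt
  have hzs := A.tendsto_zs hx0 hxs hyhat hdiff
  have hyk : Tendsto A.y atTop (𝓝 y) := tendsto_of_frequently_update hsucc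
    (fun k hk => (A.upd_succ k hk).2.1) (fun k hk => (A.upd_fail k hk).2.1) hyhat
  have hzk : Tendsto A.z atTop (𝓝 (A.g xstar - Jt (A.J xstar) y)) :=
    tendsto_of_frequently_update hsucc
      (fun k hk => (A.upd_succ k hk).2.2.1) (fun k hk => (A.upd_fail k hk).2.2.1) hzs
  refine ⟨hx.prodMk_nhds (hyk.prodMk_nhds hzk), A.c_eq_zero_of_tendsto hes hxs hsucc, rfl,
    vmin_eq_zero_of_complementary hx0 (A.nonneg_of_tendsto_zs hws hzs) fun i hi => ?_⟩
  exact sub_eq_zero.mpr (congrArg (· ⟨i, hi⟩) hy).symm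

/-- Corollary 1: global convergence. -/
theorem stmt9 {n m : ℕ} (A : LCL n m)
    (hws : A.ωstar = 0) (hes : A.ηstar = 0)
    -- compactness of the iterates
    (B : Set (Evec n)) (hB : IsCompact B)
    (hxsB : ∀ k, A.xs k ∈ B) (hxB : ∀ k, A.x k ∈ B)
    -- x* is the single limit point of {x*_k}, and Ĵ(x*) has full row rank
    (xstar : Evec n)
    (hclus : MapClusterPt xstar atTop A.xs)
    (huniq : ∀ xl : Evec n, MapClusterPt xl atTop A.xs → xl = xstar)
    (hFR : FullRank (A.J xstar) xstar)
    -- y* = ỹ(x*) : the unique minimizer of y ↦ ‖ĝ(x*) − Ĵ(x*)ᵀy‖²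
    (ystar : Evec m)
    (hystar : ∀ yy : Evec m, yy ≠ ystar →
      ‖hatVec xstar (A.g xstar) - hatVec xstar (Jt (A.J xstar) ystar)‖ <
        ‖hatVec xstar (A.g xstar) - hatVec xstar (Jt (A.J xstar) yy)‖) :
    Tendsto (fun k => (A.x k, A.y k, A.z k)) atTop
      (𝓝 (xstar, ystar, A.g xstar - Jt (A.J xstar) ystar)) ∧
    isKKT A.c A.g A.J xstar ystar (A.g xstar - Jt (A.J xstar) ystar) :=
  stmt9_general A hws hes B hB hxsB xstar huniq hFR ystar hystar
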